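/- arXiv:2306.03045 — 2 statements merged into one kernel-verified Lean document; each statement's English description precedes it below -/
import Mathlib

section
/- For every mean-payoff game G and every ultimately periodic path π = (s_0, a^0), (s_1, a^1), ..., if there exists a strategy profile σ that is a Nash equilibrium from s_0 with π = π(σ, s_0), then there exists a vector z ∈ ℝ^N with z_i ∈ pun_i(G) for every player i, such that for every player i: (a) for all k ∈ ℕ, the pair (s_k, a^k) is z_i-secure for player i, and (b) z_i ≤ pay_i(π). -/
/-!
For a player `i`, only finitely many states are reachable by a one-step deviation of `i` from
the equilibrium path; let `z i` be the largest punishment value among them, so that every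
configuration of the path is `z i`-secure. Say the maximum is attained after a deviation at
step `k`. There the other players punish `i` by continuing their equilibrium strategies on the
deviating history. Whatever `i` then plays is the tail of a unilateral deviation from the
equilibrium (follow the path up to step `k`, deviate, continue), and mean payoffs ignore finite
prefixes, so the Nash property bounds the payoff of `i` by its payoff on the path.
-/

/-- A concurrent game arena over players `N`, actions `Ac` and states `St`:
an initial state and a transition function mapping a state together with a
joint action (one action per player) to a successor state. -/
structure Arena (N Ac St : Type) where
  s0 : St
  tr : St → (N → Ac) → St

/-- A finite-state strategy (transducer) for a player: a finite nonempty set of internal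
states `Q`, an initial internal state `q0`, a deterministic internal transition function
`δ` reading joint actions, and an action function `act`. -/
structure Strategy (N Ac : Type) where
  Q : Type
  [finQ : Fintype Q]
  q0 : Q
  δ : Q → (N → Ac) → Q
  act : Q → Ac

attribute [instance] Strategy.finQ

/-- A path in the arena `A` is an infinite sequence of configurations (state, joint action)
in which every successor state is obtained by applying the transition function. -/
def IsPath {N Ac St : Type} (A : Arena N Ac St) (π : ℕ → St × (N → Ac)) : Prop :=
  ∀ k : ℕ, A.tr (π k).1 (π k).2 = (π (k + 1)).1

/-- A sequence is ultimately periodic if it is of the form `ρ · τ^ω` with `τ` nonempty;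
equivalently, there are `K` and `T > 0` such that the sequence is `T`-periodic from `K` on. -/
def UltimatelyPeriodic {α : Type} (π : ℕ → α) : Prop :=
  ∃ K T : ℕ, 0 < T ∧ ∀ k : ℕ, K ≤ k → π (k + T) = π k

/-- The mean-payoff value of a path with respect to a weight function `w` on states:
the `liminf` of the averages of the weights along the state sequence of the path. -/
noncomputable def pay {N Ac St : Type} (w : St → ℤ) (π : ℕ → St × (N → Ac)) : ℝ :=
  Filter.liminf (fun n : ℕ => (∑ j ∈ Finset.range n, (w (π j).1 : ℝ)) / n) Filter.atTop

/-- Auxiliary run of a strategy profile from state `s`: the current game state together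
with the current internal state of each player's transducer. -/
def runAux {N Ac St : Type} (A : Arena N Ac St) (σ : ∀ _ : N, Strategy N Ac) (s : St) :
    ℕ → St × (∀ i : N, (σ i).Q)
  | 0 => (s, fun i => (σ i).q0)
  | k + 1 =>
      let p := runAux A σ s k
      let a : N → Ac := fun i => (σ i).act (p.2 i)
      (A.tr p.1 a, fun i => (σ i).δ (p.2 i) a)

/-- The unique path `π(σ, s)` induced by the strategy profile `σ` from state `s`:
at each step every player plays the action of its current internal state. -/
def play {N Ac St : Type} (A : Arena N Ac St) (σ : ∀ _ : N, Strategy N Ac) (s : St)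
    (k : ℕ) : St × (N → Ac) :=
  ((runAux A σ s k).1, fun i => (σ i).act ((runAux A σ s k).2 i))

/-- The strategy profile `σ` is a Nash equilibrium of the mean-payoff game with weights `w`
from state `s`: no player `i` can increase its payoff by unilaterally switching strategy. -/
def NashFrom {N Ac St : Type} [DecidableEq N] (A : Arena N Ac St) (w : N → St → ℤ)
    (σ : ∀ _ : N, Strategy N Ac) (s : St) : Prop :=
  ∀ (i : N) (σ' : Strategy N Ac),
    pay (w i) (play A (Function.update σ i σ') s) ≤ pay (w i) (play A σ s)

/-- The punishment value `pun_i(s)`: the infimum over strategy profiles of the coalition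
`N ∖ {i}` of the supremum over strategies of player `i` of the payoff of player `i`
from state `s`. -/
noncomputable def pun {N Ac St : Type} [DecidableEq N] (A : Arena N Ac St)
    (w : N → St → ℤ) (i : N) (s : St) : ℝ :=
  ⨅ σ : ∀ _ : N, Strategy N Ac, ⨆ σi : Strategy N Ac,
    pay (w i) (play A (Function.update σ i σi) s)

/-- A configuration `(s, a)` is `z`-secure for player `i` if every unilateral deviation
of `i` leads to a state whose punishment value for `i` is at most `z`. -/
def ZSecure {N Ac St : Type} [DecidableEq N] (A : Arena N Ac St) (w : N → St → ℤ)
    (i : N) (z : ℝ) (p : St × (N → Ac)) : Prop :=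
  ∀ a' : Ac, pun A w i (A.tr p.1 (Function.update p.2 i a')) ≤ z

open Filter Finset Function Topology

section Cesaro

variable {B : ℝ}

lemma abs_sum_range_le {x : ℕ → ℝ} (hx : ∀ j, |x j| ≤ B) (n : ℕ) :
    |∑ j ∈ range n, x j| ≤ n * B :=
  calc |∑ j ∈ range n, x j| ≤ ∑ j ∈ range n, |x j| := abs_sum_le_sum_abs _ _
    _ ≤ ∑ _j ∈ range n, B := sum_le_sum fun j _ => hx j
    _ = n * B := by rw [sum_const, card_range, nsmul_eq_mul]

lemma abs_avg_le {x : ℕ → ℝ} (hx : ∀ j, |x j| ≤ B) (n : ℕ) :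
    |(∑ j ∈ range n, x j) / n| ≤ B := by
  rcases n.eq_zero_or_pos with rfl | hn
  · simpa using (abs_nonneg _).trans (hx 0)
  · rw [abs_div, Nat.abs_cast, div_le_iff₀ (by positivity), mul_comm]
    exact abs_sum_range_le hx n

lemma abs_liminf_le {ι : Type*} {f : Filter ι} [f.NeBot] {u : ι → ℝ} (hu : ∀ n, |u n| ≤ B) :
    |liminf u f| ≤ B := by
  have hle : IsBoundedUnder (· ≤ ·) f u := isBoundedUnder_of ⟨B, fun n => (abs_le.1 (hu n)).2⟩
  have hge : IsBoundedUnder (· ≥ ·) f u := isBoundedUnder_of ⟨-B, fun n => (abs_le.1 (hu n)).1⟩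
  refine abs_le.2 ⟨le_liminf_of_le hle.isCoboundedUnder_ge
    (Eventually.of_forall fun n => (abs_le.1 (hu n)).1), ?_⟩
  exact (liminf_le_limsup hle hge).trans
    (limsup_le_of_le hge.isCoboundedUnder_le (Eventually.of_forall fun n => (abs_le.1 (hu n)).2))

lemma liminf_eq_of_tendsto_sub {ι : Type*} {f : Filter ι} [f.NeBot] {u v : ι → ℝ}
    (hu : ∀ n, |u n| ≤ B) (h : Tendsto (v - u) f (𝓝 0)) :
    liminf v f = liminf u f := by
  have hle : IsBoundedUnder (· ≤ ·) f u := isBoundedUnder_of ⟨B, fun n => (abs_le.1 (hu n)).2⟩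
  have hge : IsBoundedUnder (· ≥ ·) f u := isBoundedUnder_of ⟨-B, fun n => (abs_le.1 (hu n)).1⟩
  have hv : v = (v - u) + u := (sub_add_cancel v u).symm
  apply le_antisymm
  · calc liminf v f = liminf ((v - u) + u) f := by rw [← hv]
      _ ≤ limsup (v - u) f + liminf u f :=
        liminf_add_le h.isBoundedUnder_ge h.isBoundedUnder_le hge hle.isCoboundedUnder_ge
      _ = liminf u f := by rw [h.limsup_eq, zero_add]
  · calc liminf u f = liminf (v - u) f + liminf u f := by rw [h.liminf_eq, zero_add]
      _ ≤ liminf ((v - u) + u) f :=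
        le_liminf_add h.isBoundedUnder_ge h.isBoundedUnder_le hge hle.isCoboundedUnder_ge
      _ = liminf v f := by rw [← hv]

lemma liminf_avg_shift {x : ℕ → ℝ} (hx : ∀ j, |x j| ≤ B) (K : ℕ) :
    liminf (fun n : ℕ => (∑ j ∈ range n, x (K + j)) / n) atTop =
      liminf (fun n : ℕ => (∑ j ∈ range n, x j) / n) atTop := by
  refine liminf_eq_of_tendsto_sub (abs_avg_le hx) ?_
  have hdiff : ∀ n : ℕ, ∑ j ∈ range n, x (K + j) - ∑ j ∈ range n, x j =
      ∑ j ∈ range K, x (n + j) - ∑ j ∈ range K, x j := by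
    intro n
    have h₁ := sum_range_add x K n
    have h₂ := sum_range_add x n K
    rw [add_comm K n] at h₁
    linarith
  refine squeeze_zero_norm (fun n => ?_) (tendsto_const_div_atTop_nhds_zero_nat (K * B + K * B))
  rw [Pi.sub_apply, ← sub_div, hdiff, Real.norm_eq_abs, abs_div, Nat.abs_cast]
  gcongr
  exact (abs_sub _ _).trans (add_le_add (abs_sum_range_le (fun j => hx _) K) (abs_sum_range_le hx K))

end Cesaro

section Payoff

variable {N Ac St : Type}

lemma abs_pay_le {w : St → ℤ} {B : ℝ} (hB : ∀ s, |(w s : ℝ)| ≤ B) (π : ℕ → St × (N → Ac)) :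
    |pay w π| ≤ B :=
  abs_liminf_le (abs_avg_le fun _ => hB _)

lemma pay_shift [Finite St] (w : St → ℤ) (π : ℕ → St × (N → Ac)) (K : ℕ) :
    pay w (fun m => π (K + m)) = pay w π := by
  obtain ⟨B, hB⟩ := Finite.exists_le fun s => |(w s : ℝ)|
  exact liminf_avg_shift (x := fun j => (w (π j).1 : ℝ)) (fun _ => hB _) K

lemma pun_le_of_forall_pay_le [Finite St] [DecidableEq N] (A : Arena N Ac St)
    (w : N → St → ℤ) (i : N) (s : St) (ρ : N → Strategy N Ac) {r : ℝ}
    (hρ : ∀ σi : Strategy N Ac, pay (w i) (play A (update ρ i σi) s) ≤ r) :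
    pun A w i s ≤ r := by
  obtain ⟨B, hB⟩ := Finite.exists_le fun s => |(w i s : ℝ)|
  have hbdd : BddBelow (Set.range fun σ : N → Strategy N Ac =>
      ⨆ σi : Strategy N Ac, pay (w i) (play A (update σ i σi) s)) := by
    refine ⟨-B, Set.forall_mem_range.2 fun σ => ?_⟩
    have hσ : BddAbove (Set.range fun σi => pay (w i) (play A (update σ i σi) s)) :=
      ⟨B, Set.forall_mem_range.2 fun σi => (abs_le.1 (abs_pay_le hB _)).2⟩
    exact (abs_le.1 (abs_pay_le hB _)).1.trans (le_ciSup hσ (σ i))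
  have : Nonempty (Strategy N Ac) := ⟨ρ i⟩
  exact (ciInf_le hbdd ρ).trans (ciSup_le hρ)

end Payoff

namespace Strategy

variable {N Ac : Type} (S : Strategy N Ac)

/-- The internal state of `S` after reading the joint actions `h 0, …, h (k - 1)`. -/
def memory (h : ℕ → N → Ac) : ℕ → S.Q
  | 0 => S.q0
  | k + 1 => S.δ (memory h k) (h k)

def move (h : ℕ → N → Ac) (k : ℕ) : Ac :=
  S.act (S.memory h k)

def restart (q : S.Q) : Strategy N Ac :=
  { S with q0 := q }

/-- Plays `p 0, …, p (n - 1)`, then runs `S` on the history from step `n` on. -/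
def prefixThen (n : ℕ) (p : ℕ → Ac) : Strategy N Ac where
  Q := Fin n ⊕ S.Q
  q0 := if h : 0 < n then .inl ⟨0, h⟩ else .inr S.q0
  δ
    | .inl m, _ => if h : m.1 + 1 < n then .inl ⟨m.1 + 1, h⟩ else .inr S.q0
    | .inr q, a => .inr (S.δ q a)
  act
    | .inl m => p m
    | .inr q => S.act q

variable {S}

lemma memory_congr {h h' : ℕ → N → Ac} {n : ℕ} (hh : ∀ m < n, h m = h' m) :
    S.memory h n = S.memory h' n := by
  induction n with
  | zero => rfl
  | succ n ih =>
    simp only [memory, hh n n.lt_succ_self, ih fun m hm => hh m (hm.trans n.lt_succ_self)]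

lemma move_congr {h h' : ℕ → N → Ac} {n : ℕ} (hh : ∀ m < n, h m = h' m) :
    S.move h n = S.move h' n :=
  congrArg S.act (memory_congr hh)

lemma memory_restart (h : ℕ → N → Ac) (n t : ℕ) :
    (S.restart (S.memory h n)).memory (fun t => h (n + t)) t = S.memory h (n + t) := by
  induction t with
  | zero => rfl
  | succ t ih => exact congrArg (S.δ · (h (n + t))) ih

lemma move_restart (h : ℕ → N → Ac) (n t : ℕ) :
    (S.restart (S.memory h n)).move (fun t => h (n + t)) t = S.move h (n + t) :=
  congrArg S.act (memory_restart h n t)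

lemma memory_prefixThen_of_lt {n : ℕ} (p : ℕ → Ac) (h : ℕ → N → Ac) {m : ℕ} (hm : m < n) :
    (S.prefixThen n p).memory h m = .inl ⟨m, hm⟩ := by
  induction m with
  | zero => exact dif_pos hm
  | succ m ih =>
    simp only [memory, ih (m.lt_succ_self.trans hm)]
    exact dif_pos hm

lemma memory_prefixThen_add (n : ℕ) (p : ℕ → Ac) (h : ℕ → N → Ac) (t : ℕ) :
    (S.prefixThen n p).memory h (n + t) = .inr (S.memory (fun t => h (n + t)) t) := by
  induction t with
  | zero =>
    cases n with
    | zero => rfl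
    | succ n =>
      show (S.prefixThen (n + 1) p).δ ((S.prefixThen (n + 1) p).memory h n) (h n) = _
      rw [memory_prefixThen_of_lt p h n.lt_succ_self]
      exact dif_neg (lt_irrefl _)
  | succ t ih =>
    show (S.prefixThen n p).δ ((S.prefixThen n p).memory h (n + t)) (h (n + t)) = _
    rw [ih]
    rfl

lemma move_prefixThen_of_lt {n : ℕ} (p : ℕ → Ac) (h : ℕ → N → Ac) {m : ℕ} (hm : m < n) :
    (S.prefixThen n p).move h m = p m := by
  simp only [move, memory_prefixThen_of_lt p h hm]; rfl

lemma move_prefixThen_add (n : ℕ) (p : ℕ → Ac) (h : ℕ → N → Ac) (t : ℕ) :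
    (S.prefixThen n p).move h (n + t) = S.move (fun t => h (n + t)) t := by
  simp only [move, memory_prefixThen_add]; rfl

end Strategy

section Play

variable {N Ac St : Type} (A : Arena N Ac St)

def restartAfter (σ : N → Strategy N Ac) (h : ℕ → N → Ac) (n : ℕ) : N → Strategy N Ac :=
  fun j => (σ j).restart ((σ j).memory h n)

lemma isPath_play (σ : N → Strategy N Ac) (s : St) : IsPath A (play A σ s) :=
  fun _ => rfl

lemma runAux_snd (σ : N → Strategy N Ac) (s : St) (k : ℕ) (j : N) :
    (runAux A σ s k).2 j = (σ j).memory (fun m => (play A σ s m).2) k := by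
  induction k with
  | zero => rfl
  | succ k ih =>
    show (σ j).δ ((runAux A σ s k).2 j) (play A σ s k).2 = _
    rw [ih]
    rfl

lemma play_snd (σ : N → Strategy N Ac) (s : St) (k : ℕ) (j : N) :
    (play A σ s k).2 j = (σ j).move (fun m => (play A σ s m).2) k :=
  congrArg (σ j).act (runAux_snd A σ s k j)

lemma play_eq_of_isPath {σ : N → Strategy N Ac} {s : St} {π : ℕ → St × (N → Ac)}
    (h0 : (π 0).1 = s) (hπ : IsPath A π)
    (hmove : ∀ k j, (π k).2 j = (σ j).move (fun m => (π m).2) k) :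
    play A σ s = π := by
  have hrun : ∀ k, runAux A σ s k = ((π k).1, fun j => (σ j).memory (fun m => (π m).2) k) := by
    intro k
    induction k with
    | zero => rw [← h0]; rfl
    | succ k ih =>
      have hact : (fun j => (σ j).act ((runAux A σ s k).2 j)) = (π k).2 := by
        funext j
        rw [ih, hmove]
        rfl
      show (A.tr (runAux A σ s k).1 _, fun j => (σ j).δ ((runAux A σ s k).2 j) _) = _
      rw [hact, ← hπ k, ih]
      rfl
  funext k
  refine Prod.ext (congrArg Prod.fst (hrun k) :) (funext fun j => ?_)
  show (σ j).act ((runAux A σ s k).2 j) = _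
  rw [hrun k, hmove]
  rfl

end Play

section Deviation

variable {N Ac St : Type} (A : Arena N Ac St)

def deviationPath (σ η : N → Strategy N Ac) (s : St) (k : ℕ) (h : ℕ → N → Ac) :
    ℕ → St × (N → Ac) := fun m =>
  if m ≤ k then ((play A σ s m).1, h m) else play A η (A.tr (play A σ s k).1 (h k)) (m - (k + 1))

variable {A} {σ η : N → Strategy N Ac} {s : St} {k : ℕ} {h : ℕ → N → Ac}

lemma deviationPath_of_le {m : ℕ} (hm : m ≤ k) :
    deviationPath A σ η s k h m = ((play A σ s m).1, h m) :=
  if_pos hm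

lemma deviationPath_add (t : ℕ) :
    deviationPath A σ η s k h (k + 1 + t) = play A η (A.tr (play A σ s k).1 (h k)) t := by
  simp only [deviationPath, if_neg (by omega : ¬k + 1 + t ≤ k), Nat.add_sub_cancel_left]

lemma isPath_deviationPath (hpre : ∀ m < k, h m = (play A σ s m).2) :
    IsPath A (deviationPath A σ η s k h) := by
  intro m
  rcases lt_trichotomy m k with hm | rfl | hm
  · rw [deviationPath_of_le hm.le, deviationPath_of_le hm, hpre m hm]
    exact isPath_play A σ s m
  · rw [deviationPath_of_le le_rfl, deviationPath_add 0]
    rfl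
  · obtain ⟨t, rfl⟩ := Nat.exists_eq_add_of_lt hm
    rw [add_right_comm, deviationPath_add, add_assoc, deviationPath_add]
    exact isPath_play A η _ t

variable [DecidableEq N]

lemma play_update_prefixThen {i : N} (hpre : ∀ m < k, h m = (play A σ s m).2)
    (hk : ∀ j ≠ i, h k j = (play A σ s k).2 j) (σi : Strategy N Ac) :
    play A (update σ i (σi.prefixThen (k + 1) (h · i))) s =
      deviationPath A σ (update (restartAfter σ h (k + 1)) i σi) s k h := by
  set η := update (restartAfter σ h (k + 1)) i σi
  have hhist : ∀ m ≤ k, (deviationPath A σ η s k h m).2 = h m := fun m hm => by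
    rw [deviationPath_of_le hm]
  have htail : (fun t => (deviationPath A σ η s k h (k + 1 + t)).2) =
      fun t => (play A η (A.tr (play A σ s k).1 (h k)) t).2 :=
    funext fun t => by rw [deviationPath_add]
  refine play_eq_of_isPath A (by rw [deviationPath_of_le (Nat.zero_le _)]; rfl)
    (isPath_deviationPath hpre) fun m j => ?_
  rcases le_or_gt m k with hm | hm
  · have hplay : ∀ j ≠ i, h m j = (play A σ s m).2 j := fun j hj => by
      rcases hm.lt_or_eq with hm | rfl
      · rw [hpre m hm]
      · exact hk j hj
    rw [hhist m hm]
    rcases eq_or_ne j i with rfl | hj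
    · rw [update_self, Strategy.move_prefixThen_of_lt _ _ (Nat.lt_succ_of_le hm)]
    · rw [update_of_ne hj, hplay j hj, play_snd,
        Strategy.move_congr fun m' hm' => (hhist m' (hm'.trans_le hm).le).trans
          (hpre m' (hm'.trans_le hm))]
  · obtain ⟨t, rfl⟩ := Nat.exists_eq_add_of_lt hm
    rw [add_right_comm, deviationPath_add, play_snd]
    rcases eq_or_ne j i with rfl | hj
    · rw [show η j = σi from update_self .., update_self, Strategy.move_prefixThen_add, htail]
    · rw [show η j = _ from update_of_ne hj .., update_of_ne hj, restartAfter, ← htail,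
        Strategy.memory_congr fun m' hm' => (hhist m' (Nat.le_of_lt_succ hm')).symm,
        Strategy.move_restart]

variable (A) in
lemma pun_deviation_le_pay [Finite St] {w : N → St → ℤ} (hσ : NashFrom A w σ s) (i : N)
    (k : ℕ) (a : Ac) :
    pun A w i (A.tr (play A σ s k).1 (update (play A σ s k).2 i a)) ≤
      pay (w i) (play A σ s) := by
  set h := update (fun m => (play A σ s m).2) k (update (play A σ s k).2 i a)
  have hk : h k = update (play A σ s k).2 i a := update_self ..
  have hpre : ∀ m < k, h m = (play A σ s m).2 := fun m hm => update_of_ne hm.ne ..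
  have hdev : ∀ j ≠ i, h k j = (play A σ s k).2 j := fun j hj => by rw [hk, update_of_ne hj]
  rw [← hk]
  refine pun_le_of_forall_pay_le A w i _ (restartAfter σ h (k + 1)) fun σi => ?_
  let D := σi.prefixThen (k + 1) (h · i)
  calc pay (w i) (play A (update (restartAfter σ h (k + 1)) i σi) (A.tr (play A σ s k).1 (h k)))
      = pay (w i) (fun t => play A (update σ i D) s (k + 1 + t)) := by
        simp only [D, play_update_prefixThen hpre hdev, deviationPath_add]
    _ = pay (w i) (play A (update σ i D) s) := pay_shift ..
    _ ≤ pay (w i) (play A σ s) := hσ i D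

end Deviation

theorem nash_implies_secure_values_general {N Ac St : Type}
    [DecidableEq N]
    [Fintype St]
    (A : Arena N Ac St) (w : N → St → ℤ)
    (π : ℕ → St × (N → Ac))
    (h : ∃ σ : ∀ _ : N, Strategy N Ac,
        NashFrom A w σ (π 0).1 ∧ play A σ (π 0).1 = π) :
    ∃ z : N → ℝ, ∀ i : N,
        z i ∈ Set.range (pun A w i) ∧
        (∀ k : ℕ, ZSecure A w i (z i) (π k)) ∧
        z i ≤ pay (w i) π := by
  obtain ⟨σ, hσ, hplay⟩ := h
  have hvalue : ∀ i, ∃ z ∈ Set.range (pun A w i),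
      (∀ k, ZSecure A w i z (π k)) ∧ z ≤ pay (w i) π := by
    intro i
    let deviation : ℕ × Ac → St := fun p => A.tr (π p.1).1 (update (π p.1).2 i p.2)
    have : Nonempty Ac := ⟨(π 0).2 i⟩
    obtain ⟨_, ⟨⟨k, a⟩, rfl⟩, hmax⟩ := Set.exists_max_image (Set.range deviation) (pun A w i)
      (Set.toFinite _) (Set.range_nonempty _)
    refine ⟨_, Set.mem_range_self _, fun k' a' => hmax _ (Set.mem_range_self (k', a')), ?_⟩
    simpa only [hplay] using pun_deviation_le_pay A hσ i k a
  choose z hz using hvalue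
  exact ⟨z, hz⟩

/-- **(1) ⟹ (2) of the Nash characterisation.**
For every mean-payoff game and every ultimately periodic path `π`, if some Nash
equilibrium `σ` from the initial state of `π` induces `π`, then there is a vector `z`
with `z i ∈ pun_i(G)` for every player `i` such that, for every player `i`, every
configuration of `π` is `z i`-secure for `i` and `z i ≤ pay_i(π)`. -/
theorem nash_implies_secure_values {N Ac St : Type}
    [Fintype N] [Nonempty N] [DecidableEq N]
    [Fintype Ac] [Nonempty Ac] [Fintype St] [Nonempty St]
    (A : Arena N Ac St) (w : N → St → ℤ)
    (π : ℕ → St × (N → Ac)) (hπ : IsPath A π) (hup : UltimatelyPeriodic π)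
    (h : ∃ σ : ∀ _ : N, Strategy N Ac,
        NashFrom A w σ (π 0).1 ∧ play A σ (π 0).1 = π) :
    ∃ z : N → ℝ, ∀ i : N,
        z i ∈ Set.range (pun A w i) ∧
        (∀ k : ℕ, ZSecure A w i (z i) (π k)) ∧
        z i ≤ pay (w i) π :=
  nash_implies_secure_values_general A w π h
end

section
/- Let G be a mean-payoff game with players N and weight functions (w_i)_{i∈N}, and define the summed weight function w : St → ℤ by w(s) = ∑_{i∈N} w_i(s). Then for every strategy profile σ of finite-state strategies and every state s, the mean-payoff of the induced path π(σ, s) with respect to w equals ∑_{i∈N} pay_i(π(σ, s)); in particular, a dummy player whose weight function is w receives as payoff exactly the utilitarian social welfare usw(σ) = ∑_{i∈N} pay_i(π(σ, s)). -/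
/-!
The pair (game state, internal states of all transducers) evolves under a fixed self-map of a
finite set, so it is ultimately periodic, and so is every weight sequence read off the play.
The Cesàro averages of an ultimately periodic sequence converge, and for convergent sequences
the limit inferior of a finite sum of averages is the sum of the limits.
-/

open Filter Topology Finset

namespace UltimatelyPeriodic

variable {α β : Type}

theorem comp {u : ℕ → α} (hu : UltimatelyPeriodic u) (g : α → β) :
    UltimatelyPeriodic (g ∘ u) := by
  obtain ⟨K, T, hT, hper⟩ := hu
  exact ⟨K, T, hT, fun k hk => congrArg g (hper k hk)⟩

theorem exists_lt_eq {u : ℕ → α} {K T : ℕ} (hT : 0 < T) (hper : ∀ k, K ≤ k → u (k + T) = u k)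
    (n : ℕ) : ∃ m < K + T, u n = u m := by
  induction n using Nat.strong_induction_on with
  | _ n ih =>
    by_cases hn : n < K + T
    · exact ⟨n, hn, rfl⟩
    · obtain ⟨m, hm, hnm⟩ := ih (n - T) (by omega)
      refine ⟨m, hm, ?_⟩
      rw [← hnm, ← hper (n - T) (by omega), Nat.sub_add_cancel (by omega)]

theorem finite_range {u : ℕ → α} (hu : UltimatelyPeriodic u) : (Set.range u).Finite := by
  obtain ⟨K, T, hT, hper⟩ := hu
  refine (Set.finite_Iio (K + T) |>.image u).subset ?_
  rintro _ ⟨n, rfl⟩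
  obtain ⟨m, hm, hnm⟩ := exists_lt_eq hT hper n
  exact ⟨m, hm, hnm.symm⟩

theorem sum_window_eq {u : ℕ → ℝ} {K T : ℕ} (hper : ∀ k, K ≤ k → u (k + T) = u k) {n : ℕ}
    (hn : K ≤ n) : ∑ j ∈ range (n + T), u j - ∑ j ∈ range n, u j =
      ∑ j ∈ range (K + T), u j - ∑ j ∈ range K, u j := by
  induction n, hn using Nat.le_induction with
  | base => rfl
  | succ n hn ih =>
    rw [← ih, Nat.add_right_comm, sum_range_succ, sum_range_succ, hper n hn]
    ring

theorem tendsto_cesaro {u : ℕ → ℝ} (hu : UltimatelyPeriodic u) :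
    ∃ L, Tendsto (fun n : ℕ => (∑ j ∈ range n, u j) / n) atTop (𝓝 L) := by
  obtain ⟨K, T, hT, hper⟩ := hu
  set L := (∑ j ∈ range (K + T), u j - ∑ j ∈ range K, u j) / T
  -- The deviation of the partial sums from the linear growth `n * L` is ultimately periodic.
  set dev : ℕ → ℝ := fun n => ∑ j ∈ range n, u j - n * L
  have hdev : UltimatelyPeriodic dev := by
    refine ⟨K, T, hT, fun n hn => ?_⟩
    have hwin := sum_window_eq hper hn
    have hTL : (T : ℝ) * L = ∑ j ∈ range (K + T), u j - ∑ j ∈ range K, u j :=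
      mul_div_cancel₀ _ (by exact_mod_cast hT.ne')
    simp only [dev, Nat.cast_add]
    linarith
  have hbdd : IsBoundedUnder (· ≤ ·) atTop (norm ∘ dev) := by
    obtain ⟨b, hb⟩ := (hdev.comp norm).finite_range.bddAbove
    exact isBoundedUnder_of ⟨b, fun n => hb ⟨n, rfl⟩⟩
  have hdev_div : Tendsto (fun n : ℕ => (n : ℝ)⁻¹ * dev n) atTop (𝓝 0) :=
    tendsto_inv_atTop_nhds_zero_nat.zero_mul_isBoundedUnder_le hbdd
  refine ⟨L, ?_⟩
  have hsum := hdev_div.const_add L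
  rw [add_zero] at hsum
  refine hsum.congr' ?_
  filter_upwards [eventually_ne_atTop 0] with n hn
  have hn' : (n : ℝ) ≠ 0 := by exact_mod_cast hn
  simp only [dev]
  field_simp
  ring

end UltimatelyPeriodic

theorem ultimatelyPeriodic_iterate {X : Type} [Finite X] (f : X → X) (x : X) :
    UltimatelyPeriodic fun k => f^[k] x := by
  obtain ⟨m, n, hmn, heq⟩ := Finite.exists_ne_map_eq_of_infinite fun k : ℕ => f^[k] x
  wlog hlt : m < n generalizing m n
  · exact this n m hmn.symm heq.symm (by omega)
  refine ⟨m, n - m, by omega, fun k hk => ?_⟩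
  show f^[k + (n - m)] x = f^[k] x
  rw [show k + (n - m) = (k - m) + n by omega, Function.iterate_add_apply, ← heq,
    ← Function.iterate_add_apply, Nat.sub_add_cancel hk]

section Play

variable {N Ac St : Type} (A : Arena N Ac St) (σ : ∀ _ : N, Strategy N Ac) (s : St)

def runStep (p : St × ∀ i : N, (σ i).Q) : St × ∀ i : N, (σ i).Q :=
  (A.tr p.1 fun i => (σ i).act (p.2 i), fun i => (σ i).δ (p.2 i) fun j => (σ j).act (p.2 j))

theorem runAux_eq_iterate (k : ℕ) :
    runAux A σ s k = (runStep A σ)^[k] (s, fun i => (σ i).q0) := by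
  induction k with
  | zero => rfl
  | succ k ih => rw [Function.iterate_succ_apply', ← ih]; rfl

theorem ultimatelyPeriodic_play [Finite N] [Finite St] : UltimatelyPeriodic (play A σ s) := by
  have hrun : UltimatelyPeriodic (runAux A σ s) := by
    rw [funext (runAux_eq_iterate A σ s)]
    exact ultimatelyPeriodic_iterate (runStep A σ) _
  exact hrun.comp fun p => (p.1, fun i => (σ i).act (p.2 i))

end Play

theorem pay_sum_eq_sum_pay {N Ac St ι : Type} {π : ℕ → St × (N → Ac)}
    (hπ : UltimatelyPeriodic π) (t : Finset ι) (w : ι → St → ℤ) :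
    pay (fun st => ∑ i ∈ t, w i st) π = ∑ i ∈ t, pay (w i) π := by
  choose L hL using fun i => (hπ.comp fun p => (w i p.1 : ℝ)).tendsto_cesaro
  have hsum : Tendsto (fun n : ℕ => ∑ i ∈ t, (∑ j ∈ range n, (w i (π j).1 : ℝ)) / n) atTop
      (𝓝 (∑ i ∈ t, L i)) :=
    tendsto_finsetSum t fun i _ => hL i
  have hpay : ∀ i, pay (w i) π = L i := fun i => (hL i).liminf_eq
  rw [Finset.sum_congr rfl fun i _ => hpay i, ← hsum.liminf_eq, pay]
  congr 1
  ext n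
  push_cast
  rw [← Finset.sum_div, Finset.sum_comm]

theorem pay_sum_weights_eq_usw_general {N Ac St : Type}
    [Fintype N] [Fintype St]
    (A : Arena N Ac St) (w : N → St → ℤ)
    (σ : ∀ _ : N, Strategy N Ac) (s : St) :
    pay (fun st => ∑ i : N, w i st) (play A σ s) =
      ∑ i : N, pay (w i) (play A σ s) :=
  pay_sum_eq_sum_pay (ultimatelyPeriodic_play A σ s) univ w

/-- In a mean-payoff game with weight functions `w i`, let `wSum` be the
summed weight function `wSum s = ∑ i, w i s`. For every profile `σ` of finite-state
strategies and every state `s`, the mean-payoff of the induced path `π(σ, s)` with respect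
to `wSum` equals the sum over the players of their payoffs; in particular a dummy player
whose weight function is `wSum` receives as payoff exactly the utilitarian social welfare
`usw(σ) = ∑ i, pay_i(π(σ, s))`. -/
theorem pay_sum_weights_eq_usw {N Ac St : Type}
    [Fintype N] [Nonempty N] [DecidableEq N]
    [Fintype Ac] [Nonempty Ac] [Fintype St] [Nonempty St]
    (A : Arena N Ac St) (w : N → St → ℤ)
    (σ : ∀ _ : N, Strategy N Ac) (s : St) :
    pay (fun st => ∑ i : N, w i st) (play A σ s) =
      ∑ i : N, pay (w i) (play A σ s) :=
  pay_sum_weights_eq_usw_general A w σ s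
end
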